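/- Let μ ∈ P(ℝ^d) satisfy the intrinsic-dimension condition I(d_μ, s) for some s ∈ ℕ and d_μ ∈ (0,∞). Then there exists a constant K > 0 such that for all T ∈ ℕ and ε > 0 with ε·3^T ≤ 1, there exist a set Ω̄ ⊂ ℝ^d and partitions A_T, A_{T−1}, ..., A_1 of Ω̄, each A_{t−1} refining A_t, satisfying |A_t| ≤ K(ε 3^t)^{−d_μ}, D_{A_t} := sup_{A ∈ A_t} sup_{x,y ∈ A} ‖x−y‖ ≤ 3^t ε, and μ(Ω̄^c) ≤ 1_{{d_μ > 2s}} K (3^T ε)^{s d_μ/(d_μ − 2s)}. -/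
import Mathlib


open MeasureTheory Set
open scoped ENNReal BigOperators

/-- A measure `μ` satisfies the intrinsic-dimension condition `I(dμ, s)`. -/
def IntrinsicDim {E : Type*} [MeasurableSpace E] [NormedAddCommGroup E]
    (μ : Measure E) (dμ : ℝ) (s : ℕ) : Prop :=
  ∃ K > (0:ℝ), ∀ ε > (0:ℝ), ∃ (O : Set E) (𝒜 : Finset (Set E)),
    μ Oᶜ ≤ ENNReal.ofReal
        (if 2 * (s:ℝ) < dμ then ε ^ ((s:ℝ) * dμ / (dμ - 2 * s)) else 0) ∧
    (⋃ A ∈ 𝒜, A) = O ∧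
    ((𝒜 : Set (Set E)).Pairwise Disjoint) ∧
    (∀ A ∈ 𝒜, ∀ x ∈ A, ∀ y ∈ A, ‖x - y‖ ≤ ε) ∧
    ((𝒜.card : ℝ) ≤ K * ε ^ (-dμ))

/-- **refinement lemma.** If `μ` satisfies `I(dμ, s)`, then there is `K > 0`
such that for all `T ∈ ℕ` and `ε > 0` with `ε 3^T ≤ 1` there are a set `Ω̄` and partitions
`𝒜_T, …, 𝒜_1` of `Ω̄`, each `𝒜_t` refined by `𝒜_{t-1}`, with
`|𝒜_t| ≤ K (ε 3^t)^{−dμ}`, cell diameters at most `3^t ε`, and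
`μ(Ω̄ᶜ) ≤ 1_{dμ > 2s} K (3^T ε)^{s dμ/(dμ − 2s)}`. -/
theorem stmt9 {d : ℕ} (μ : Measure (EuclideanSpace ℝ (Fin d))) [IsProbabilityMeasure μ]
    (s : ℕ) (hs : 1 ≤ s) (dμ : ℝ) (hdμ : 0 < dμ)
    (h : IntrinsicDim μ dμ s) :
    ∃ K > (0:ℝ), ∀ (T : ℕ) (ε : ℝ), 0 < ε → ε * 3 ^ T ≤ 1 →
      ∃ (O : Set (EuclideanSpace ℝ (Fin d)))
        (𝒜 : ℕ → Finset (Set (EuclideanSpace ℝ (Fin d)))),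
        (∀ t ∈ Finset.Icc 1 T,
          (⋃ A ∈ 𝒜 t, A) = O ∧
          ((𝒜 t : Set (Set (EuclideanSpace ℝ (Fin d)))).Pairwise Disjoint) ∧
          (((𝒜 t).card : ℝ) ≤ K * (ε * 3 ^ t) ^ (-dμ)) ∧
          (∀ A ∈ 𝒜 t, ∀ x ∈ A, ∀ y ∈ A, ‖x - y‖ ≤ 3 ^ t * ε)) ∧
        (∀ t ∈ Finset.Icc 1 (T - 1), ∀ A ∈ 𝒜 t, ∃ B ∈ 𝒜 (t + 1), A ⊆ B) ∧
        μ Oᶜ ≤ ENNReal.ofReal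
          (if 2 * (s:ℝ) < dμ then K * (3 ^ T * ε) ^ ((s:ℝ) * dμ / (dμ - 2 * s)) else 0) := by
  classical
  obtain ⟨K0, hK0, H⟩ := h
  set E := EuclideanSpace ℝ (Fin d)
  set α : ℝ := (s:ℝ) * dμ / (dμ - 2 * s) with hαdef
  -- when 2s < dμ, α > 0 and 3^α > 1
  have hαpos : 2 * (s:ℝ) < dμ → 0 < α := by
    intro hc
    have hs0 : (0:ℝ) < s := by exact_mod_cast hs
    exact div_pos (mul_pos hs0 hdμ) (by linarith)
  have hρ1 : 2 * (s:ℝ) < dμ → 1 < (3:ℝ) ^ α := by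
    intro hc
    exact (Real.one_lt_rpow_iff_of_pos (by norm_num)).mpr (Or.inl ⟨by norm_num, hαpos hc⟩)
  set Ct : ℝ := if 2 * (s:ℝ) < dμ then 1 / ((3:ℝ) ^ α - 1) else 0 with hCtdef
  have hCt0 : 0 ≤ Ct := by
    rw [hCtdef]; split_ifs with hc
    · have h1 := hρ1 hc
      exact le_of_lt (div_pos one_pos (by linarith))
    · exact le_refl 0
  set K : ℝ := K0 * (3:ℝ) ^ dμ + 1 + Ct with hKdef
  have h3dμ : (0:ℝ) < (3:ℝ) ^ dμ := Real.rpow_pos_of_pos (by norm_num) _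
  have hKpos : 0 < K := by
    have : 0 < K0 * (3:ℝ) ^ dμ := mul_pos hK0 h3dμ
    rw [hKdef]; linarith
  refine ⟨K, hKpos, ?_⟩
  intro T ε hε hεT
  -- apply hypothesis at scales 3^n ε
  have Hn : ∀ n : ℕ, ∃ (O : Set E) (Ps : Finset (Set E)),
      μ Oᶜ ≤ ENNReal.ofReal
        (if 2 * (s:ℝ) < dμ then ((3:ℝ)^n * ε) ^ α else 0) ∧
      (⋃ A ∈ Ps, A) = O ∧
      ((Ps : Set (Set E)).Pairwise Disjoint) ∧
      (∀ A ∈ Ps, ∀ x ∈ A, ∀ y ∈ A, ‖x - y‖ ≤ (3:ℝ)^n * ε) ∧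
      ((Ps.card : ℝ) ≤ K0 * ((3:ℝ)^n * ε) ^ (-dμ)) := by
    intro n
    exact H ((3:ℝ)^n * ε) (by positivity)
  choose Ωs P hμΩ hUP hDisjP hDiamP hCardP using Hn
  set G : Set E := ⋂ n ∈ Finset.range T, Ωs n with hGdef
  have hGsub : ∀ n < T, G ⊆ Ωs n := by
    intro n hn x hx
    exact mem_iInter₂.mp hx n (Finset.mem_range.mpr hn)
  set P' : ℕ → Finset (Set E) := fun n => insert ((Ωs n)ᶜ) (P n) with hP'def
  -- every point lies in some cell of P' n
  have hcellex : ∀ (n : ℕ) (x : E), ∃ Q, Q ∈ P' n ∧ x ∈ Q := by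
    intro n x
    by_cases hx : x ∈ Ωs n
    · rw [← hUP n] at hx
      obtain ⟨Q, hQ, hxQ⟩ := mem_iUnion₂.mp hx
      exact ⟨Q, Finset.mem_insert_of_mem hQ, hxQ⟩
    · exact ⟨(Ωs n)ᶜ, Finset.mem_insert_self _ _, hx⟩
  choose cell hcmem hcx using hcellex
  -- representative points
  obtain ⟨rep, hrep⟩ : ∃ rep : Set E → E, ∀ Q : Set E, (Q ∩ G).Nonempty → rep Q ∈ Q ∩ G :=
    ⟨fun Q => if h : (Q ∩ G).Nonempty then h.choose else 0,
      fun Q h => by simp only [dif_pos h]; exact h.choose_spec⟩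
  -- chain classes
  obtain ⟨Fc, hFc0, hFcS⟩ : ∃ Fc : ℕ → E → Set E,
      (∀ x, Fc 0 x = cell 0 x) ∧ ∀ n x, Fc (n+1) x = cell (n+1) (rep (Fc n x)) :=
    ⟨fun n => Nat.rec (motive := fun _ => E → Set E) (cell 0)
        (fun n ih x => cell (n+1) (rep (ih x))) n,
      fun _ => rfl, fun _ _ => rfl⟩
  have hFmem : ∀ (n : ℕ) (x : E), Fc n x ∈ P' n := by
    intro n x
    cases n with
    | zero => rw [hFc0]; exact hcmem 0 x
    | succ n => rw [hFcS]; exact hcmem (n+1) _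
  -- cells meeting G are genuine cells with small diameter
  have hreal : ∀ n < T, ∀ Q, Q ∈ P' n → (Q ∩ G).Nonempty → Q ∈ P n := by
    intro n hn Q hQ ⟨z, hzQ, hzG⟩
    rcases Finset.mem_insert.mp hQ with hc | hc
    · exact absurd (hGsub n hn hzG) (by rw [hc] at hzQ; exact hzQ)
    · exact hc
  have hdiam' : ∀ n < T, ∀ Q, Q ∈ P' n → (Q ∩ G).Nonempty →
      ∀ a ∈ Q, ∀ b ∈ Q, ‖a - b‖ ≤ (3:ℝ)^n * ε := by
    intro n hn Q hQ hne a ha b hb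
    exact hDiamP n Q (hreal n hn Q hQ hne) a ha b hb
  -- chain lemma
  have chainLem : ∀ n, n < T → ∀ y, y ∈ G →
      ∃ z, z ∈ Fc n y ∧ z ∈ G ∧ ‖y - z‖ ≤ ((3:ℝ)^n - 1)/2 * ε := by
    intro n
    induction n with
    | zero =>
      intro _ y hy
      exact ⟨y, by rw [hFc0]; exact hcx 0 y, hy, by simp⟩
    | succ n ih =>
      intro hnT y hy
      obtain ⟨z, hz, hzG, hzb⟩ := ih (Nat.lt_of_succ_lt hnT) y hy
      have hne : (Fc n y ∩ G).Nonempty := ⟨z, hz, hzG⟩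
      have hw := hrep _ hne
      have hdist : ‖z - rep (Fc n y)‖ ≤ (3:ℝ)^n * ε :=
        hdiam' n (Nat.lt_of_succ_lt hnT) _ (hFmem n y) hne z hz _ hw.1
      refine ⟨rep (Fc n y), ?_, hw.2, ?_⟩
      · rw [hFcS]; exact hcx (n+1) _
      · calc ‖y - rep (Fc n y)‖ ≤ ‖y - z‖ + ‖z - rep (Fc n y)‖ := norm_sub_le_norm_sub_add_norm_sub _ _ _
          _ ≤ ((3:ℝ)^n - 1)/2 * ε + (3:ℝ)^n * ε := add_le_add hzb hdist
          _ = ((3:ℝ)^(n+1) - 1)/2 * ε := by rw [pow_succ]; ring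
  -- the partitions
  refine ⟨G, fun t => (P' (t-1)).image (fun Q => {y : E | y ∈ G ∧ Fc (t-1) y = Q}),
    ?_, ?_, ?_⟩
  · -- per-level properties
    intro t ht
    rw [Finset.mem_Icc] at ht
    obtain ⟨m, rfl⟩ : ∃ m, t = m + 1 := ⟨t - 1, (Nat.succ_pred_eq_of_pos ht.1).symm⟩
    have hmT : m < T := ht.2
    have hidx : m + 1 - 1 = m := rfl
    refine ⟨?_, ?_, ?_, ?_⟩
    · -- union
      ext y
      simp only [mem_iUnion, Finset.mem_image, exists_prop]
      constructor
      · rintro ⟨A, ⟨Q, hQ, rfl⟩, hyA⟩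
        exact hyA.1
      · intro hy
        exact ⟨_, ⟨Fc m y, hFmem m y, rfl⟩, hy, rfl⟩
    · -- pairwise disjoint
      intro A hA B hB hAB
      simp only [Finset.coe_image, mem_image, Finset.mem_coe] at hA hB
      obtain ⟨QA, _, rfl⟩ := hA
      obtain ⟨QB, _, rfl⟩ := hB
      rw [Set.disjoint_left]
      intro y hyA hyB
      exact hAB (by rw [← hyA.2, ← hyB.2])
    · -- cardinality
      have hc1 : ((P' m).image (fun Q => {y : E | y ∈ G ∧ Fc m y = Q})).card ≤ (P m).card + 1 :=
        le_trans Finset.card_image_le (Finset.card_insert_le _ _)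
      have hc2 : ((P m).card : ℝ) ≤ K0 * ((3:ℝ)^m * ε) ^ (-dμ) := hCardP m
      set X : ℝ := (ε * (3:ℝ)^(m+1)) ^ (-dμ) with hXdef
      have hXpos : 0 < X := Real.rpow_pos_of_pos (by positivity) _
      have hX1 : 1 ≤ X := by
        have hle1 : ε * (3:ℝ)^(m+1) ≤ 1 := by
          have : (3:ℝ)^(m+1) ≤ (3:ℝ)^T :=
            pow_le_pow_right₀ (by norm_num) ht.2
          nlinarith
        have := Real.rpow_le_rpow_of_exponent_ge (by positivity) hle1
          (by linarith : -dμ ≤ 0)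
        simpa using this
      have heq : ((3:ℝ)^m * ε) ^ (-dμ) = (3:ℝ)^dμ * X := by
        have h1 : (3:ℝ)^m * ε = (ε * (3:ℝ)^(m+1)) / 3 := by rw [pow_succ]; ring
        rw [h1, Real.div_rpow (by positivity) (by norm_num),
          Real.rpow_neg (by norm_num : (0:ℝ) ≤ 3)]
        field_simp
        ring
      calc (((P' m).image (fun Q => {y : E | y ∈ G ∧ Fc m y = Q})).card : ℝ)
          ≤ ((P m).card : ℝ) + 1 := by exact_mod_cast hc1
        _ ≤ K0 * ((3:ℝ)^m * ε) ^ (-dμ) + 1 := by linarith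
        _ = K0 * (3:ℝ)^dμ * X + 1 := by rw [heq]; ring
        _ ≤ K * X := by rw [hKdef]; nlinarith
    · -- diameter
      rintro A hA x hx y hy
      obtain ⟨Q, hQ, rfl⟩ := Finset.mem_image.mp hA
      obtain ⟨hxG, hxQ⟩ := hx
      obtain ⟨hyG, hyQ⟩ := hy
      simp only [Nat.add_sub_cancel] at hxQ hyQ hQ
      obtain ⟨zx, hzx, hzxG, hzxb⟩ := chainLem m hmT x hxG
      obtain ⟨zy, hzy, hzyG, hzyb⟩ := chainLem m hmT y hyG
      have hzxQ : zx ∈ Q := by rw [← hxQ]; exact hzx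
      have hzyQ : zy ∈ Q := by rw [← hyQ]; exact hzy
      have hQmem : Q ∈ P' m := hQ
      have hQne : (Q ∩ G).Nonempty := ⟨zx, hzxQ, hzxG⟩
      have hmid : ‖zx - zy‖ ≤ (3:ℝ)^m * ε := hdiam' m hmT Q hQmem hQne zx hzxQ zy hzyQ
      have htri : ‖x - y‖ ≤ ‖x - zx‖ + ‖zx - zy‖ + ‖zy - y‖ := by
        simpa [dist_eq_norm] using dist_triangle4 x zx zy y
      have hzyb' : ‖zy - y‖ ≤ ((3:ℝ)^m - 1)/2 * ε := by rw [norm_sub_rev]; exact hzyb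
      have hfin : ((3:ℝ)^m - 1)/2 * ε + (3:ℝ)^m * ε + ((3:ℝ)^m - 1)/2 * ε ≤ (3:ℝ)^(m+1) * ε := by
        rw [pow_succ]
        nlinarith [pow_pos (show (0:ℝ) < 3 by norm_num) m]
      linarith
  · -- refinement
    intro t ht A hA
    rw [Finset.mem_Icc] at ht
    obtain ⟨m, rfl⟩ : ∃ m, t = m + 1 := ⟨t - 1, (Nat.succ_pred_eq_of_pos ht.1).symm⟩
    obtain ⟨Q, hQ, rfl⟩ := Finset.mem_image.mp hA
    simp only [Nat.add_sub_cancel] at hQ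
    refine ⟨{y : E | y ∈ G ∧ Fc (m+1) y = cell (m+1) (rep Q)},
      Finset.mem_image_of_mem _ (hcmem (m+1) (rep Q)), ?_⟩
    intro y hy
    simp only [Nat.add_sub_cancel, mem_setOf_eq] at hy
    refine ⟨hy.1, ?_⟩
    rw [hFcS, hy.2]
  · -- measure bound
    have hcompl : Gᶜ = ⋃ n ∈ Finset.range T, (Ωs n)ᶜ := by
      rw [hGdef]
      simp [compl_iInter]
    have h1 : μ Gᶜ ≤ ∑ n ∈ Finset.range T, μ ((Ωs n)ᶜ) := by
      rw [hcompl]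
      exact measure_biUnion_finset_le _ _
    by_cases hc : 2 * (s:ℝ) < dμ
    · have h2 : μ Gᶜ ≤ ∑ n ∈ Finset.range T, ENNReal.ofReal (((3:ℝ)^n * ε) ^ α) := by
        refine h1.trans (Finset.sum_le_sum fun n _ => ?_)
        simpa [hc] using hμΩ n
      have h3 : ∑ n ∈ Finset.range T, ENNReal.ofReal (((3:ℝ)^n * ε) ^ α)
          = ENNReal.ofReal (∑ n ∈ Finset.range T, ((3:ℝ)^n * ε) ^ α) := by
        rw [ENNReal.ofReal_sum_of_nonneg]
        intro n _
        positivity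
      -- geometric sum bound
      set ρ : ℝ := (3:ℝ) ^ α with hρdef
      have hρgt : 1 < ρ := hρ1 hc
      have hterm : ∀ n : ℕ, ((3:ℝ)^n * ε) ^ α = ρ^n * ε^α := by
        intro n
        rw [Real.mul_rpow (by positivity) hε.le]
        congr 1
        rw [← Real.rpow_natCast (3:ℝ) n, ← Real.rpow_mul (by norm_num), mul_comm,
          Real.rpow_mul (by norm_num), Real.rpow_natCast]
      have hsum : ∑ n ∈ Finset.range T, ((3:ℝ)^n * ε) ^ α ≤ Ct * ((3:ℝ)^T * ε) ^ α := by
        have e1 : ∑ n ∈ Finset.range T, ((3:ℝ)^n * ε) ^ α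
            = (∑ n ∈ Finset.range T, ρ^n) * ε^α := by
          rw [Finset.sum_mul]
          exact Finset.sum_congr rfl fun n _ => hterm n
        have hCteq : Ct = 1 / (ρ - 1) := by rw [hCtdef, if_pos hc]
        rw [e1, geom_sum_eq (ne_of_gt hρgt) T, hterm T, hCteq]
        have hεα : (0:ℝ) ≤ ε ^ α := Real.rpow_nonneg hε.le _
        have hd : (0:ℝ) < ρ - 1 := by linarith
        calc (ρ^T - 1)/(ρ-1) * ε^α ≤ ρ^T/(ρ-1) * ε^α :=
              mul_le_mul_of_nonneg_right ((div_le_div_iff_of_pos_right hd).mpr (by linarith)) hεα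
          _ = 1/(ρ-1) * (ρ^T * ε^α) := by ring
      rw [if_pos hc]
      calc μ Gᶜ ≤ ENNReal.ofReal (∑ n ∈ Finset.range T, ((3:ℝ)^n * ε) ^ α) := by
            rw [← h3]; exact h2
        _ ≤ ENNReal.ofReal (K * ((3:ℝ)^T * ε) ^ α) := by
            apply ENNReal.ofReal_le_ofReal
            have hCtK : Ct ≤ K := by
              rw [hKdef]; nlinarith
            have hXnn : (0:ℝ) ≤ ((3:ℝ)^T * ε) ^ α := Real.rpow_nonneg (by positivity) _
            nlinarith
    · have h2 : μ Gᶜ ≤ 0 := by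
        refine h1.trans ?_
        have : ∀ n ∈ Finset.range T, μ ((Ωs n)ᶜ) ≤ 0 := by
          intro n _
          simpa [hc] using hμΩ n
        calc ∑ n ∈ Finset.range T, μ ((Ωs n)ᶜ) ≤ ∑ n ∈ Finset.range T, 0 :=
            Finset.sum_le_sum this
          _ = 0 := by simp
      rw [if_neg hc]
      simpa using h2
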